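/- Loop-sum of the difference-quasipotential vanishes: with V(ē) = V_tree(ē) + V_loop(ē) defined graphically as in the tree-loop decomposition, for every oriented cycle ℓ̄ in the graph G one has Σ_{ē ∈ ℓ̄} V(ē) = 0; hence V(ē) is the discrete gradient of a well-defined function on vertices. -/

import Mathlib

open Finset
open scoped Classical

variable {V : Type*} [Fintype V] [DecidableEq V]

/-- `p` encodes a spanning tree of `G` rooted at `r`, oriented toward the root. -/
def IsRootedTree (G : SimpleGraph V) (r : V) (p : V → V) : Prop :=
  p r = r ∧ (∀ v, v ≠ r → G.Adj v (p v)) ∧ ∀ v, ∃ n, p^[n] v = r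

/-- Weight of a parent-map encoded oriented subgraph: product of the rates of its
directed edges. -/
noncomputable def wt (k : V → V → ℝ) (p : V → V) : ℝ :=
  ∏ v ∈ Finset.univ.filter (fun v => p v ≠ v), k v (p v)

/-- Total weight of all rooted spanning trees of `G`. -/
noncomputable def W (G : SimpleGraph V) (k : V → V → ℝ) : ℝ :=
  ∑ x, ∑ p ∈ Finset.univ.filter (fun p : V → V => IsRootedTree G x p), wt k p

/-- Sum of `q` along the path from `x` to the root of the tree encoded by `p`. -/
noncomputable def qToRoot (q : V → V → ℝ) (p : V → V) (x : V) : ℝ :=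
  ∑ i ∈ Finset.range (Fintype.card V), q (p^[i] x) (p^[i + 1] x)

/-- `q_T(x → y)`: sum of `q` over the unique path from `x` to `y` in the tree `p`. -/
noncomputable def qPath (q : V → V → ℝ) (p : V → V) (x y : V) : ℝ :=
  qToRoot q p x - qToRoot q p y

/-- The tree part of the difference-quasipotential:
`V_tree(x,y) = (1/W) Σ_T q_T(x→y) Σ_u w(T_u)`. -/
noncomputable def Vtree (G : SimpleGraph V) (k q : V → V → ℝ) (x y : V) : ℝ :=
  (W G k)⁻¹ *
    ∑ u, ∑ p ∈ Finset.univ.filter (fun p : V → V => IsRootedTree G u p),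
      wt k p * qPath q p x y

/-- `v` is a periodic point of `p` with positive period. -/
def IsPer (p : V → V) (v : V) : Prop := ∃ n, 0 < n ∧ p^[n] v = v

/-- `p` encodes an oriented spanning tree-loop of `G`. -/
def IsSpanningTreeLoop (G : SimpleGraph V) (p : V → V) : Prop :=
  (∀ v, G.Adj v (p v)) ∧
  ∀ u v, IsPer p u → IsPer p v → ∃ m, p^[m] u = v

/-- `p` encodes an oriented spanning tree-loop-tree of `G`: one component is a rooted tree
(rooted at the unique fixed point) and the other is an oriented tree-loop with a single
directed cycle. -/
def IsSpanningTreeLoopTree (G : SimpleGraph V) (p : V → V) : Prop :=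
  (∀ v, p v ≠ v → G.Adj v (p v)) ∧
  (∃! r, p r = r) ∧
  (∃ v, p v ≠ v ∧ IsPer p v) ∧
  (∀ u v, p u ≠ u → IsPer p u → p v ≠ v → IsPer p v → ∃ m, p^[m] u = v)

/-- `q(ℓ̄)`: sum of `q` over the directed edges of the oriented loop of `p`. -/
noncomputable def qLoop (q : V → V → ℝ) (p : V → V) : ℝ :=
  ∑ v ∈ Finset.univ.filter (fun v => IsPer p v ∧ p v ≠ v), q v (p v)

/-- Product of the rates over all directed edges of an oriented spanning tree-loop. -/
noncomputable def wAll (k : V → V → ℝ) (p : V → V) : ℝ :=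
  ∏ v, k v (p v)

/-- `v` belongs to the tree-loop component of `p` (its forward orbit reaches the
non-trivial cycle). -/
def ReachesLoop (p : V → V) (v : V) : Prop :=
  ∃ n, p (p^[n] v) ≠ p^[n] v ∧ IsPer p (p^[n] v)

/-- The loop part of the difference-quasipotential over the directed edge `(x,y)`:
`V_loop(x,y) = (1/W) Σ_{H ∈ ℋ_e} σ_H((x,y)) Σ_{H̄ ∈ O(H^{(e)})} q(ℓ̄) w(H̄)`: the sum is over
all oriented spanning tree-loop-trees obtained by removing the edge `e = {x,y}` (the two
endpoints lie in different components, one of them in the tree-loop component), with sign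
`+1` if `(x,y)` points away from the loop (i.e. `x` in the tree-loop part) and `-1`
otherwise. -/
noncomputable def Vloop (G : SimpleGraph V) (k q : V → V → ℝ) (x y : V) : ℝ :=
  (W G k)⁻¹ *
    ∑ p ∈ Finset.univ.filter
        (fun p : V → V => IsSpanningTreeLoopTree G p ∧ Xor' (ReachesLoop p x) (ReachesLoop p y)),
      (if ReachesLoop p x then (1:ℝ) else -1) * qLoop q p * wt k p

/-- The difference-quasipotential over a directed edge. -/
noncomputable def Vdiff (G : SimpleGraph V) (k q : V → V → ℝ) (x y : V) : ℝ :=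
  Vtree G k q x y + Vloop G k q x y

/-! Both parts of `V` are gradients. A tree path sum splits through the root,
`q_T(x → y) = q_T(x → root) - q_T(y → root)`, and for a tree-loop-tree `H` the sign `σ_H(x,y)`
(taken as `0` when the edge does not separate the two components) is
`1[x reaches the loop] - 1[y reaches the loop]`. Hence `V(x,y) = g x - g y` for a potential `g`,
and the sum of `V` around a closed walk telescopes to zero. -/

noncomputable def treePotential (G : SimpleGraph V) (k q : V → V → ℝ) (x : V) : ℝ :=
  (W G k)⁻¹ *
    ∑ u, ∑ p ∈ Finset.univ.filter (fun p : V → V => IsRootedTree G u p), wt k p * qToRoot q p x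

noncomputable def loopPotential (G : SimpleGraph V) (k q : V → V → ℝ) (x : V) : ℝ :=
  (W G k)⁻¹ *
    ∑ p ∈ Finset.univ.filter (fun p : V → V => IsSpanningTreeLoopTree G p),
      (if ReachesLoop p x then (1:ℝ) else 0) * qLoop q p * wt k p

noncomputable def quasipotential (G : SimpleGraph V) (k q : V → V → ℝ) (x : V) : ℝ :=
  treePotential G k q x + loopPotential G k q x

theorem ite_xor_ite_neg_one_eq_sub {R : Type*} [Ring R] (a b : Prop) [Decidable a] [Decidable b] :
    (if Xor' a b then (if a then (1 : R) else -1) else 0) =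
      (if a then 1 else 0) - (if b then 1 else 0) := by
  by_cases a <;> by_cases b <;> simp_all [Xor']

theorem Vtree_eq_sub (G : SimpleGraph V) (k q : V → V → ℝ) (x y : V) :
    Vtree G k q x y = treePotential G k q x - treePotential G k q y := by
  simp only [Vtree, treePotential, qPath, mul_sub, sum_sub_distrib]

theorem Vloop_eq_sub (G : SimpleGraph V) (k q : V → V → ℝ) (x y : V) :
    Vloop G k q x y = loopPotential G k q x - loopPotential G k q y := by
  simp only [Vloop, loopPotential, ← mul_sub, ← sum_sub_distrib, sum_filter]
  congr 1
  refine sum_congr rfl fun p _ => ?_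
  by_cases hH : IsSpanningTreeLoopTree G p
  · simp only [hH, true_and, if_true]
    rw [← sub_mul, ← sub_mul, ← ite_xor_ite_neg_one_eq_sub]
    split_ifs <;> ring
  · simp only [hH, false_and, if_false, sub_zero]

theorem Vdiff_eq_sub (G : SimpleGraph V) (k q : V → V → ℝ) (x y : V) :
    Vdiff G k q x y = quasipotential G k q x - quasipotential G k q y := by
  rw [Vdiff, Vtree_eq_sub, Vloop_eq_sub, quasipotential, quasipotential]
  ring

theorem stmt11_general (G : SimpleGraph V)
    (k : V → V → ℝ)
    (q : V → V → ℝ) :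
    (∀ (n : ℕ), 1 ≤ n → ∀ c : ℕ → V, c n = c 0 →
        (∀ i < n, G.Adj (c i) (c (i + 1))) →
        (∀ i < n, ∀ j < n, c i = c j → i = j) →
        ∑ i ∈ Finset.range n, Vdiff G k q (c i) (c (i + 1)) = 0) ∧
    ∃ g : V → ℝ, ∀ a b, G.Adj a b → Vdiff G k q a b = g a - g b := by
  refine ⟨fun n _ c hclosed _ _ => ?_, quasipotential G k q, fun a b _ => Vdiff_eq_sub G k q a b⟩
  simp only [Vdiff_eq_sub]
  rw [sum_range_sub' (fun i => quasipotential G k q (c i)), hclosed, sub_self]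

/-- the sum of the difference-quasipotential `V(ē) = V_tree(ē) + V_loop(ē)`
over the directed edges of every oriented cycle of `G` vanishes; hence `V(ē)` is the
discrete gradient of a well-defined function on vertices. -/
theorem stmt11 (G : SimpleGraph V) (hG : G.Connected)
    (k : V → V → ℝ)
    (hk : ∀ a b, 0 < k a b ↔ G.Adj a b)
    (hk0 : ∀ a b, ¬ G.Adj a b → k a b = 0)
    (q : V → V → ℝ) (hqa : ∀ a b, q a b = - q b a) :
    (∀ (n : ℕ), 1 ≤ n → ∀ c : ℕ → V, c n = c 0 →
        (∀ i < n, G.Adj (c i) (c (i + 1))) →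
        (∀ i < n, ∀ j < n, c i = c j → i = j) →
        ∑ i ∈ Finset.range n, Vdiff G k q (c i) (c (i + 1)) = 0) ∧
    ∃ g : V → ℝ, ∀ a b, G.Adj a b → Vdiff G k q a b = g a - g b :=
  stmt11_general G k q
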